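/- Let G be a signed graph, let L be its signed Laplacian, and let v be a unit eigenvector of L with eigenvalue λ1. For a vertex i, let L^(i) be the Laplacian of G with vertex i removed and let v̂ be v with the i-th entry removed. Then v̂^T L^(i) v̂ = λ1 - (Σ_{j∈N(i)} v_j^2 + v_i^2 (2λ1 - d(i))). -/

import Mathlib

open Matrix

structure SignedGraph (V : Type) [Fintype V] [DecidableEq V] where
  sign : V → V → ℝ
  symm : ∀ i j, sign i j = sign j i
  loopless : ∀ i, sign i i = 0
  vals : ∀ i j, sign i j = 0 ∨ sign i j = 1 ∨ sign i j = -1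

variable {V : Type} [Fintype V] [DecidableEq V]

/-- The signed adjacency matrix. -/
def SignedGraph.adj (G : SignedGraph V) : Matrix V V ℝ :=
  Matrix.of G.sign

/-- The degree of a vertex: number of incident edges of either sign. -/
def SignedGraph.deg (G : SignedGraph V) (i : V) : ℝ :=
  ∑ j, |G.sign i j|

/-- The signed Laplacian L = D - A. -/
def SignedGraph.lap (G : SignedGraph V) : Matrix V V ℝ :=
  Matrix.diagonal G.deg - G.adj

/-- A signed graph is balanced if the vertices can be two-colored (±1) so that
every edge sign equals the product of its endpoint colors. -/
def SignedGraph.Balanced (G : SignedGraph V) : Prop :=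
  ∃ x : V → ℝ, (∀ i, x i = 1 ∨ x i = -1) ∧
    ∀ i j, G.sign i j ≠ 0 → G.sign i j = x i * x j

/-- Connectivity of a signed graph. -/
def SignedGraph.Connected (G : SignedGraph V) : Prop :=
  ∀ i j : V, Relation.ReflTransGen (fun a b => G.sign a b ≠ 0) i j

/-- The induced signed subgraph on a vertex set. -/
def SignedGraph.induce (G : SignedGraph V) (S : Finset V) :
    SignedGraph {v // v ∈ S} where
  sign a b := G.sign a.1 b.1
  symm a b := G.symm a.1 b.1
  loopless a := G.loopless a.1
  vals a b := G.vals a.1 b.1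

/-- The underlying simple graph of a signed graph. -/
def SignedGraph.toSimpleGraph (G : SignedGraph V) : SimpleGraph V where
  Adj i j := G.sign i j ≠ 0
  symm := by
    constructor
    intro i j h
    rw [G.symm j i]
    exact h
  loopless := by
    constructor
    intro i h
    exact h (G.loopless i)

/-!
Deleting vertex `i` changes row `j ≠ i` of the Laplacian only by removing the entry `-σ(j,i)`
and lowering the degree by `|σ(j,i)|`. Summed against `v`, this expresses the quadratic form of
`L⁽ⁱ⁾` through that of `L`, and the eigen-equation evaluates both `vᵀ L v = λ₁` and the row
`(L v)ᵢ = λ₁ vᵢ`.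
-/

lemma Finset.sum_compl_singleton_eq_sub {ι M : Type*} [Fintype ι] [DecidableEq ι] [AddCommGroup M]
    (i : ι) (f : ι → M) : ∑ j ∈ {i}ᶜ, f j = ∑ j, f j - f i := by
  rw [Fintype.sum_eq_add_sum_compl i f, add_sub_cancel_left]

namespace SignedGraph

variable (G : SignedGraph V)

lemma lap_mulVec_apply (x : V → ℝ) (j : V) :
    (G.lap *ᵥ x) j = G.deg j * x j - ∑ k, G.sign j k * x k := by
  simp only [lap, adj, sub_mulVec, Pi.sub_apply, mulVec_diagonal]
  rfl

lemma deg_induce_compl_singleton (i : V) (j : {x // x ∈ ({i}ᶜ : Finset V)}) :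
    (G.induce {i}ᶜ).deg j = G.deg j - |G.sign j i| :=
  (Finset.sum_coe_sort _ fun k => |G.sign j k|).trans (Finset.sum_compl_singleton_eq_sub _ _)

lemma lap_induce_compl_singleton_mulVec_apply (x : V → ℝ) (i : V)
    (j : {x // x ∈ ({i}ᶜ : Finset V)}) :
    ((G.induce {i}ᶜ).lap *ᵥ fun k => x k.1) j =
      (G.lap *ᵥ x) j - |G.sign j i| * x j + G.sign j i * x i := by
  have hrow : ∑ k, (G.induce {i}ᶜ).sign j k * x k = ∑ k, G.sign j k * x k - G.sign j i * x i :=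
    (Finset.sum_coe_sort _ fun k => G.sign j k * x k).trans (Finset.sum_compl_singleton_eq_sub _ _)
  rw [lap_mulVec_apply, lap_mulVec_apply, deg_induce_compl_singleton, hrow]
  ring

lemma dotProduct_lap_induce_compl_singleton_mulVec (x : V → ℝ) (i : V) :
    (fun j : {x // x ∈ ({i}ᶜ : Finset V)} => x j.1) ⬝ᵥ
        (G.induce {i}ᶜ).lap *ᵥ (fun j => x j.1) =
      x ⬝ᵥ G.lap *ᵥ x - ∑ j, |G.sign i j| * x j ^ 2 + G.deg i * x i ^ 2
        - 2 * x i * (G.lap *ᵥ x) i := by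
  have hrow := G.lap_mulVec_apply x i
  have hsign : ∑ j, x j * G.sign j i = ∑ j, G.sign i j * x j :=
    Finset.sum_congr rfl fun j _ => by rw [G.symm, mul_comm]
  have habs : ∑ j, x j * (|G.sign j i| * x j) = ∑ j, |G.sign i j| * x j ^ 2 :=
    Finset.sum_congr rfl fun j _ => by rw [G.symm]; ring
  calc _ = ∑ j ∈ {i}ᶜ, x j * ((G.lap *ᵥ x) j - |G.sign j i| * x j + G.sign j i * x i) := by
        simp only [dotProduct, lap_induce_compl_singleton_mulVec_apply]
        exact Finset.sum_coe_sort _ fun j => x j * ((G.lap *ᵥ x) j - |G.sign j i| * x j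
          + G.sign j i * x i)
    _ = x ⬝ᵥ G.lap *ᵥ x - ∑ j, x j * (|G.sign j i| * x j) + (∑ j, x j * G.sign j i) * x i
          - x i * (G.lap *ᵥ x) i := by
        simp only [Finset.sum_compl_singleton_eq_sub, G.loopless, abs_zero, dotProduct,
          Finset.sum_mul, mul_add, mul_sub, Finset.sum_add_distrib, Finset.sum_sub_distrib, mul_assoc]
        ring
    _ = _ := by rw [hsign, habs]; linear_combination x i * hrow

lemma dotProduct_lap_induce_compl_singleton_mulVec_of_eigen {x : V → ℝ} {μ : ℝ}
    (hx : G.lap *ᵥ x = μ • x) (hunit : ∑ j, x j ^ 2 = 1) (i : V) :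
    (fun j : {x // x ∈ ({i}ᶜ : Finset V)} => x j.1) ⬝ᵥ
        (G.induce {i}ᶜ).lap *ᵥ (fun j => x j.1) =
      μ - ((∑ j, |G.sign i j| * x j ^ 2) + x i ^ 2 * (2 * μ - G.deg i)) := by
  have hquad : x ⬝ᵥ G.lap *ᵥ x = μ := by
    rw [hx, dotProduct_smul, dotProduct, smul_eq_mul]
    simp only [← sq, hunit, mul_one]
  rw [dotProduct_lap_induce_compl_singleton_mulVec, hquad, hx, Pi.smul_apply, smul_eq_mul]
  ring

end SignedGraph

theorem stmt14 (G : SignedGraph V) (hL : G.lap.IsHermitian)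
    (v : V → ℝ) (hunit : ∑ j, v j ^ 2 = 1)
    (heig : G.lap.mulVec v = (⨅ k, hL.eigenvalues k) • v) (i : V) :
    (fun j : {x // x ∈ ({i}ᶜ : Finset V)} => v j.1) ⬝ᵥ
        (G.induce ({i}ᶜ : Finset V)).lap.mulVec (fun j => v j.1) =
      (⨅ k, hL.eigenvalues k) -
        ((∑ j, |G.sign i j| * v j ^ 2) +
          v i ^ 2 * (2 * (⨅ k, hL.eigenvalues k) - G.deg i)) :=
  G.dotProduct_lap_induce_compl_singleton_mulVec_of_eigen heig hunit i
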